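/- Any 2n×2n real invertible skew-symmetric matrix A can be written as A = O [[0, Λ], [−Λ, 0]] Oᵀ, where O is a 2n×2n real orthogonal matrix and Λ is an n×n positive diagonal matrix. -/

import Mathlib

/-!
The symmetric operator `-A²` is positive definite, since `⟪x, -A² x⟫ = ‖A x‖²`. For a unit
eigenvector `v` of it with eigenvalue `λ²`, the vectors `v` and `w = -λ⁻¹ A v` are orthonormal and
`A v = -λ w`, `A w = λ v`. Their span is `A`-invariant, hence so is its orthogonal complement
(`A` is skew), and induction on `n` produces an orthonormal basis in which `A` has the block form.
-/

open Matrix Module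
open scoped RealInnerProductSpace

namespace LinearMap

variable {E : Type*} [NormedAddCommGroup E] [InnerProductSpace ℝ E]

def IsSkewSymmetric (f : E →ₗ[ℝ] E) : Prop :=
  ∀ x y, ⟪f x, y⟫ = -⟪x, f y⟫

theorem toMatrix_eq_fromBlocks_of_apply {R M ι : Type*} [CommRing R] [AddCommGroup M]
    [Module R M] [Fintype ι] [DecidableEq ι] (b : Basis (ι ⊕ ι) R M) (f : M →ₗ[R] M)
    (lam : ι → R) (hl : ∀ i, f (b (.inl i)) = -lam i • b (.inr i))
    (hr : ∀ i, f (b (.inr i)) = lam i • b (.inl i)) :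
    toMatrix b b f = fromBlocks 0 (diagonal lam) (-diagonal lam) 0 := by
  ext (k | k) (l | l) <;>
    simp [toMatrix_apply, hl, hr, Finsupp.single_apply, diagonal_apply, eq_comm] <;>
    split_ifs <;> simp_all

namespace IsSkewSymmetric

variable {f : E →ₗ[ℝ] E}

theorem inner_self_apply (hf : f.IsSkewSymmetric) (x : E) : ⟪x, f x⟫ = 0 := by
  have := hf x x
  rw [real_inner_comm] at this
  linarith

theorem isSymmetric_neg_comp_self (hf : f.IsSkewSymmetric) : (-(f ∘ₗ f)).IsSymmetric := by
  intro x y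
  simp only [neg_apply, comp_apply, inner_neg_left, inner_neg_right, hf (f x), hf x, neg_neg]

theorem restrict_invariant (hf : f.IsSkewSymmetric) {V : Submodule ℝ E}
    (hV : ∀ v ∈ V, f v ∈ V) : (f.restrict hV).IsSkewSymmetric :=
  fun v w => hf v w

theorem invariant_orthogonal (hf : f.IsSkewSymmetric) {V : Submodule ℝ E}
    (hV : ∀ v ∈ V, f v ∈ V) (x : E) (hx : x ∈ Vᗮ) : f x ∈ Vᗮ := by
  intro v hv
  rw [real_inner_comm, hf, real_inner_comm, hx (f v) (hV v hv), neg_zero]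

theorem exists_orthonormal_pair [FiniteDimensional ℝ E] [Nontrivial E] (hf : f.IsSkewSymmetric)
    (hinj : Function.Injective f) :
    ∃ (v w : E) (c : ℝ), Orthonormal ℝ ![v, w] ∧ 0 < c ∧ f v = -c • w ∧ f w = c • v := by
  have hT := hf.isSymmetric_neg_comp_self
  let i : Fin (finrank ℝ E) := ⟨0, finrank_pos⟩
  set v := hT.eigenvectorBasis rfl i
  set μ := hT.eigenvalues rfl i
  have hffv : f (f v) = -(μ • v) := by
    rw [← neg_neg (f (f v))]
    exact congrArg Neg.neg (hT.apply_eigenvectorBasis rfl i)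
  have hv : ‖v‖ = 1 := (hT.eigenvectorBasis rfl).orthonormal.1 i
  have hμ : μ = ‖f v‖ ^ 2 := by
    have := hf (f v) v
    rw [hffv, inner_neg_left, inner_smul_left, real_inner_self_eq_norm_sq, hv] at this
    simpa using this
  have hfv : f v ≠ 0 := fun h =>
    (hT.eigenvectorBasis rfl).orthonormal.ne_zero i (hinj (by rw [h, map_zero]))
  set c := ‖f v‖
  have hc : 0 < c := norm_pos_iff.mpr hfv
  refine ⟨v, -c⁻¹ • f v, c, ?_, hc, ?_, ?_⟩
  · rw [orthonormal_iff_ite]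
    intro a b
    fin_cases a <;> fin_cases b <;>
      simp [hv, inner_smul_right, inner_smul_left, hf.inner_self_apply, norm_smul, hc.ne',
        abs_of_pos hc]
    · rw [real_inner_comm, hf.inner_self_apply]
    · exact .inl (inv_mul_cancel₀ hc.ne')
  · rw [smul_smul]
    field_simp
    simp
  · rw [map_smul, hffv, hμ, smul_neg, smul_smul]
    field_simp
    rw [neg_smul, neg_neg]

end IsSkewSymmetric

end LinearMap

section

variable {E : Type*} [NormedAddCommGroup E] [InnerProductSpace ℝ E]

theorem orthonormal_sumElim_cons {n : ℕ} {v w : E} (hvw : Orthonormal ℝ ![v, w])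
    {u : Fin n ⊕ Fin n → E} (hu : Orthonormal ℝ u) (hv : ∀ k, ⟪v, u k⟫ = 0)
    (hw : ∀ k, ⟪w, u k⟫ = 0) :
    Orthonormal ℝ (Sum.elim (Fin.cons v (u ∘ .inl) : Fin (n + 1) → E) (Fin.cons w (u ∘ .inr))) := by
  have hv1 : ‖v‖ = 1 := hvw.1 0
  have hw1 : ‖w‖ = 1 := hvw.1 1
  have hvw0 : ⟪v, w⟫ = 0 := hvw.2 zero_ne_one
  have hwv0 : ⟪w, v⟫ = 0 := hvw.2 one_ne_zero
  have hv' (k) : ⟪u k, v⟫ = 0 := by rw [real_inner_comm, hv]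
  have hw' (k) : ⟪u k, w⟫ = 0 := by rw [real_inner_comm, hw]
  rw [orthonormal_iff_ite] at hu ⊢
  rintro (i | i) (j | j) <;> cases i using Fin.cases <;> cases j using Fin.cases <;>
    simp [hv1, hw1, hvw0, hwv0, hv, hw, hv', hw', hu, Fin.succ_ne_zero, (Fin.succ_ne_zero _).symm]

end

namespace LinearMap.IsSkewSymmetric

variable {E : Type*} [NormedAddCommGroup E] [InnerProductSpace ℝ E] [FiniteDimensional ℝ E]
  {f : E →ₗ[ℝ] E}

theorem exists_orthonormal_skew_pairs {n : ℕ} (hn : finrank ℝ E = 2 * n)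
    (hf : f.IsSkewSymmetric) (hinj : Function.Injective f) :
    ∃ (u : Fin n ⊕ Fin n → E) (lam : Fin n → ℝ), Orthonormal ℝ u ∧ (∀ i, 0 < lam i) ∧
      (∀ i, f (u (.inl i)) = -lam i • u (.inr i)) ∧ ∀ i, f (u (.inr i)) = lam i • u (.inl i) := by
  induction n generalizing E with
  | zero => exact ⟨fun _ => 0, Fin.elim0, .of_isEmpty _, (·.elim0), (·.elim0), (·.elim0)⟩
  | succ n ih =>
    have : Nontrivial E := Module.nontrivial_of_finrank_eq_succ (n := 2 * n + 1) (by omega)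
    obtain ⟨v, w, c, hvw, hc, hfv, hfw⟩ := hf.exists_orthonormal_pair hinj
    set W := Submodule.span ℝ (Set.range ![v, w])
    have hvW : v ∈ W := Submodule.subset_span ⟨0, rfl⟩
    have hwW : w ∈ W := Submodule.subset_span ⟨1, rfl⟩
    have hW : ∀ x ∈ W, f x ∈ W := by
      refine fun x hx => Submodule.span_le (p := W.comap f) |>.mpr ?_ hx
      rintro _ ⟨i, rfl⟩
      fin_cases i
      · simpa [hfv] using W.smul_mem (-c) hwW
      · simpa [hfw] using W.smul_mem c hvW
    have hK : finrank ℝ Wᗮ = 2 * n := by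
      have := W.finrank_add_finrank_orthogonal
      rw [finrank_span_eq_card hvw.linearIndependent] at this
      simp at this
      omega
    obtain ⟨u, lam, hu, hlam, hl, hr⟩ := ih hK (hf.restrict_invariant (hf.invariant_orthogonal hW))
      (fun x y h => Subtype.ext (hinj (congrArg Subtype.val h)))
    refine ⟨Sum.elim (Fin.cons v fun i => u (.inl i)) (Fin.cons w fun i => u (.inr i)),
      Fin.cons c lam,
      orthonormal_sumElim_cons hvw (hu.comp_linearIsometry Wᗮ.subtypeₗᵢ)
        (fun k => Submodule.inner_right_of_mem_orthogonal hvW (u k).2)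
        (fun k => Submodule.inner_right_of_mem_orthogonal hwW (u k).2),
      Fin.cases hc hlam, Fin.cases hfv fun i => congrArg Subtype.val (hl i),
      Fin.cases hfw fun i => congrArg Subtype.val (hr i)⟩

theorem exists_orthonormalBasis_toMatrix_eq_fromBlocks {n : ℕ} (hn : finrank ℝ E = 2 * n)
    (hf : f.IsSkewSymmetric) (hinj : Function.Injective f) :
    ∃ (b : OrthonormalBasis (Fin n ⊕ Fin n) ℝ E) (lam : Fin n → ℝ), (∀ i, 0 < lam i) ∧
      toMatrix b.toBasis b.toBasis f = fromBlocks 0 (diagonal lam) (-diagonal lam) 0 := by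
  obtain ⟨u, lam, hu, hlam, hl, hr⟩ := hf.exists_orthonormal_skew_pairs hn hinj
  have hspan : ⊤ ≤ Submodule.span ℝ (Set.range u) :=
    (hu.linearIndependent.span_eq_top_of_card_eq_finrank' (by simp [hn, two_mul])).ge
  refine ⟨.mk hu hspan, lam, hlam, toMatrix_eq_fromBlocks_of_apply _ f lam ?_ ?_⟩
  · simpa using hl
  · simpa using hr

end LinearMap.IsSkewSymmetric

theorem Matrix.isSkewSymmetric_toEuclideanLin {ι : Type*} [Fintype ι] [DecidableEq ι]
    {A : Matrix ι ι ℝ} (hA : Aᵀ = -A) : A.toEuclideanLin.IsSkewSymmetric := fun x y => by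
  rw [← LinearMap.adjoint_inner_right, ← toEuclideanLin_conjTranspose_eq_adjoint,
    conjTranspose_eq_transpose_of_trivial, hA, map_neg, LinearMap.neg_apply, inner_neg_right]

theorem skew_symmetric_canonical_form (n : ℕ)
    (A : Matrix (Fin n ⊕ Fin n) (Fin n ⊕ Fin n) ℝ)
    (hskew : Aᵀ = -A) (hA : IsUnit A.det) :
    ∃ (O : Matrix (Fin n ⊕ Fin n) (Fin n ⊕ Fin n) ℝ) (lam : Fin n → ℝ),
      Oᵀ * O = 1 ∧ (∀ i, 0 < lam i) ∧
      A = O * Matrix.fromBlocks 0 (Matrix.diagonal lam) (-(Matrix.diagonal lam)) 0 * Oᵀ := by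
  have hinj : Function.Injective A.toEuclideanLin := fun x y h => WithLp.ofLp_injective 2
    (mulVec_injective_iff_isUnit.mpr ((isUnit_iff_isUnit_det A).mpr hA) (congrArg WithLp.ofLp h))
  obtain ⟨b, lam, hlam, hb⟩ := (isSkewSymmetric_toEuclideanLin hskew)
    |>.exists_orthonormalBasis_toMatrix_eq_fromBlocks (n := n) (by simp [two_mul]) hinj
  let e := EuclideanSpace.basisFun (Fin n ⊕ Fin n) ℝ
  set O := e.toBasis.toMatrix b.toBasis
  have hO : Oᵀ * O = 1 := by
    rw [← conjTranspose_eq_transpose_of_trivial]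
    exact e.toMatrix_orthonormalBasis_conjTranspose_mul_self b
  have hOinv : b.toBasis.toMatrix e.toBasis = Oᵀ := by
    calc _ = Oᵀ * O * b.toBasis.toMatrix e.toBasis := by rw [hO, one_mul]
      _ = Oᵀ := by rw [mul_assoc, Basis.toMatrix_mul_toMatrix_flip, mul_one]
  refine ⟨O, lam, hO, hlam, ?_⟩
  rw [← hb, ← hOinv, basis_toMatrix_mul_linearMap_toMatrix_mul_basis_toMatrix,
    toEuclideanLin_eq_toLin_orthonormal, LinearMap.toMatrix_toLin]
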